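/- If v ∈ RG satisfies v = v^T, v² = 0, and the row space C(v) of σ(v) has cardinality |R|^{n/2}, then C(v) is a self-dual code of length n over R. -/

import Mathlib

/-- The matrix σ(v) of a group ring element, with (i,j) entry the coefficient of i⁻¹ * j. -/
noncomputable def sigmaMat {R G : Type*} [Semiring R] [Group G] (v : MonoidAlgebra R G) :
    Matrix G G R := Matrix.of fun i j => v.coeff (i⁻¹ * j)

/-- The canonical involution on a group ring, sending Σ αᵢ gᵢ to Σ αᵢ gᵢ⁻¹. -/
noncomputable def transInvol {R G : Type*} [Semiring R] [Group G] (v : MonoidAlgebra R G) :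
    MonoidAlgebra R G := MonoidAlgebra.ofCoeff (Finsupp.equivMapDomain (Equiv.inv G) v.coeff)
/-- The Euclidean dual of a linear code C ⊆ R^ι. -/
noncomputable def dualCode {R ι : Type*} [CommRing R] [Fintype ι] (C : Submodule R (ι → R)) :
    Submodule R (ι → R) where
  carrier := {x | ∀ c ∈ C, ∑ i, x i * c i = 0}
  add_mem' := by
    intro a b ha hb c hc
    have h1 := ha c hc
    have h2 := hb c hc
    simp only [Pi.add_apply, add_mul, Finset.sum_add_distrib, h1, h2, add_zero]
  zero_mem' := by intro c hc; simp
  smul_mem' := by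
    intro r x hx c hc
    have h := hx c hc
    simp only [Pi.smul_apply, smul_eq_mul, mul_assoc]
    rw [← Finset.mul_sum, h, mul_zero]

/-!
The map `v ↦ σ(v)` is multiplicative and sends `vᵀ` to the transposed matrix, so
`σ(v) σ(v)ᵀ = σ(v vᵀ) = σ(v²) = 0`: the rows of `σ(v)` are pairwise orthogonal and `C(v)` is
self-orthogonal. Over a Frobenius ring `|C| |C^⊥| = |R|^n`, and `|C| = |R|^(n/2)` then forces
`|C^⊥| = |C|`, so the inclusion `C ⊆ C^⊥` is an equality.
-/

open Matrix

section GroupRing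

variable {R G : Type*} [Semiring R] [Group G]

theorem coeff_transInvol (v : MonoidAlgebra R G) (g : G) :
    (transInvol v).coeff g = v.coeff g⁻¹ := rfl

theorem sigmaMat_transInvol (v : MonoidAlgebra R G) :
    sigmaMat (transInvol v) = (sigmaMat v)ᵀ := by
  ext i j
  simp [sigmaMat, coeff_transInvol]

theorem sigmaMat_zero : sigmaMat (0 : MonoidAlgebra R G) = 0 := rfl

theorem sigmaMat_mul [Fintype G] (u w : MonoidAlgebra R G) :
    sigmaMat (u * w) = sigmaMat u * sigmaMat w := by
  ext i j
  rw [sigmaMat, of_apply, MonoidAlgebra.coeff_mul_apply_left,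
    Finsupp.sum_fintype _ _ fun _ => zero_mul _, mul_apply,
    ← Equiv.sum_comp (Equiv.mulLeft i⁻¹)]
  simp [sigmaMat, mul_assoc]

end GroupRing

section Codes

variable {R : Type*} [CommRing R]

theorem mem_dualCode_iff {ι : Type*} [Fintype ι] {C : Submodule R (ι → R)} {x : ι → R} :
    x ∈ dualCode C ↔ ∀ c ∈ C, x ⬝ᵥ c = 0 := Iff.rfl

theorem mem_dualCode_span {ι : Type*} [Fintype ι] {s : Set (ι → R)} {x : ι → R}
    (h : ∀ y ∈ s, x ⬝ᵥ y = 0) : x ∈ dualCode (Submodule.span R s) := by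
  rw [mem_dualCode_iff]
  intro c hc
  induction hc using Submodule.span_induction with
  | mem y hy => exact h y hy
  | zero => exact dotProduct_zero x
  | add y z _ _ hy hz => rw [dotProduct_add, hy, hz, add_zero]
  | smul r y _ hy => rw [dotProduct_smul, hy, smul_zero]

theorem span_rows_le_dualCode {ι κ : Type*} [Fintype κ] (M : Matrix ι κ R) (hM : M * Mᵀ = 0) :
    Submodule.span R (Set.range M) ≤ dualCode (Submodule.span R (Set.range M)) := by
  rw [Submodule.span_le]
  rintro _ ⟨i, rfl⟩
  refine mem_dualCode_span ?_
  rintro _ ⟨k, rfl⟩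
  simpa [mul_apply'] using congrFun (congrFun hM i) k

theorem dualCode_map_funCongrLeft {ι κ : Type*} [Fintype ι] [Fintype κ] (e : ι ≃ κ)
    (C : Submodule R (ι → R)) :
    dualCode (C.map (LinearEquiv.funCongrLeft R R e.symm).toLinearMap)
      = (dualCode C).map (LinearEquiv.funCongrLeft R R e.symm).toLinearMap := by
  ext x
  rw [Submodule.mem_map_equiv]
  simp only [mem_dualCode_iff, Submodule.mem_map, forall_exists_index, and_imp,
    forall_apply_eq_imp_iff₂]
  refine forall₂_congr fun c _ => ?_
  change x ⬝ᵥ c ∘ e.symm = 0 ↔ x ∘ e ⬝ᵥ c = 0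
  rw [dotProduct_comp_equiv_symm]

-- `hFrob` only speaks about index types in `Type`; it reaches `ι` through `ι ≃ Fin n`.
theorem card_mul_card_dualCode {ι : Type*} [Fintype ι]
    (hFrob : ∀ (κ : Type) [Fintype κ] (C : Submodule R (κ → R)),
      Nat.card C * Nat.card (dualCode C) = Nat.card R ^ Fintype.card κ)
    (C : Submodule R (ι → R)) :
    Nat.card C * Nat.card (dualCode C) = Nat.card R ^ Fintype.card ι := by
  let L := LinearEquiv.funCongrLeft R R (Fintype.equivFin ι).symm
  have h := hFrob (Fin (Fintype.card ι)) (C.map L.toLinearMap)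
  rwa [dualCode_map_funCongrLeft, ← Nat.card_congr (L.submoduleMap C).toEquiv,
    ← Nat.card_congr (L.submoduleMap (dualCode C)).toEquiv, Fintype.card_fin] at h

theorem eq_dualCode_of_le_of_card_sq [Finite R] {ι : Type*} [Fintype ι] {C : Submodule R (ι → R)}
    (hle : C ≤ dualCode C)
    (hdual : Nat.card C * Nat.card (dualCode C) = Nat.card R ^ Fintype.card ι)
    (hcard : Nat.card C ^ 2 = Nat.card R ^ Fintype.card ι) :
    C = dualCode C := by
  have hcard_dual : Nat.card (dualCode C) = Nat.card C :=
    Nat.eq_of_mul_eq_mul_left Nat.card_pos (by rw [hdual, ← hcard, sq])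
  exact SetLike.coe_injective <|
    Set.Finite.eq_of_subset_of_card_le (Set.toFinite _) hle hcard_dual.le

end Codes

theorem stmt_11_general (R G : Type*) [CommRing R] [Fintype R] [Group G] [Fintype G]
    (hFrob : ∀ (ι : Type) [Fintype ι] (C : Submodule R (ι → R)),
      Nat.card C * Nat.card (dualCode C) = Nat.card R ^ Fintype.card ι)
    (heven : Even (Fintype.card G))
    (v : MonoidAlgebra R G) (hvT : transInvol v = v) (hv2 : v * v = 0)
    (hcard : Nat.card (Submodule.span R (Set.range fun i => sigmaMat v i))
      = Nat.card R ^ (Fintype.card G / 2)) :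
    Submodule.span R (Set.range fun i => sigmaMat v i)
      = dualCode (Submodule.span R (Set.range fun i => sigmaMat v i)) := by
  have hrows : sigmaMat v * (sigmaMat v)ᵀ = 0 := by
    rw [← sigmaMat_transInvol, hvT, ← sigmaMat_mul, hv2, sigmaMat_zero]
  refine eq_dualCode_of_le_of_card_sq (span_rows_le_dualCode _ hrows)
    (card_mul_card_dualCode hFrob _) ?_
  rw [hcard, ← pow_mul, Nat.div_mul_cancel (even_iff_two_dvd.mp heven)]

/-- Over a finite commutative Frobenius ring, if v = vᵀ, v² = 0 and |C(v)| = |R|^(n/2),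
    then the row space C(v) of σ(v) is a self-dual code of length n. -/
theorem stmt_11 (R G : Type*) [CommRing R] [Fintype R] [Group G] [Fintype G] [DecidableEq G]
    (hFrob : ∀ (ι : Type) [Fintype ι] (C : Submodule R (ι → R)),
      Nat.card C * Nat.card (dualCode C) = Nat.card R ^ Fintype.card ι)
    (heven : Even (Fintype.card G))
    (v : MonoidAlgebra R G) (hvT : transInvol v = v) (hv2 : v * v = 0)
    (hcard : Nat.card (Submodule.span R (Set.range fun i => sigmaMat v i))
      = Nat.card R ^ (Fintype.card G / 2)) :
    Submodule.span R (Set.range fun i => sigmaMat v i)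
      = dualCode (Submodule.span R (Set.range fun i => sigmaMat v i)) :=
  stmt_11_general R G hFrob heven v hvT hv2 hcard
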